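/- Let A be a complex M×N matrix and B a complex N×K matrix with AB ≠ 0. Then a pair (A₀, B₀) with A₀B₀ = AB minimizes ‖A'‖·‖B'‖ over all pairs (A', B') with A'B' = AB if and only if A₀ᴴA₀/‖A₀‖² = B₀B₀ᴴ/‖B₀‖². -/

import Mathlib

/-!
(⇒) Let `P` be an orthogonal projection and `Q` the map that multiplies the range of `P` by
`c ≠ 0` and fixes its kernel. The pair `(A₀Q, Q⁻¹B₀)` has the same product, and by Pythagoras
its squared norms are `p + |c|²x` and `q + |c|⁻²y`, where `p = ‖A₀(1 - P)‖²`, `x = ‖A₀P‖²`,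
`q = ‖(1 - P)B₀‖²`, `y = ‖PB₀‖²`. Their product is `pq + xy + py/r + xqr` with `r = |c|²`, and
it is minimal at `r = 1` only in the equality case `py = xq` of AM–GM. This says
`tr((‖B₀‖² A₀ᴴA₀ - ‖A₀‖² B₀B₀ᴴ) P) = 0`; taking for `P` the eigenprojections of this Hermitian
matrix shows that it vanishes.

(⇐) Let `G` be the pseudo-inverse of `B₀B₀ᴴ` and `Z = (‖B₀‖/‖A₀‖) A₀GB₀`. The balance condition
makes `ZᴴZ = B₀ᴴGB₀` an orthogonal projection, so `‖B'Zᴴ‖ ≤ ‖B'‖`, and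
`Re tr(A₀B₀Zᴴ) = ‖A₀‖‖B₀‖`. Hence if `A'B' = A₀B₀`, by Cauchy–Schwarz
`‖A₀‖‖B₀‖ = Re tr(A'(B'Zᴴ)) ≤ ‖A'‖‖B'Zᴴ‖ ≤ ‖A'‖‖B'‖`.
-/

open Matrix

/-- The Frobenius norm of a complex matrix: the ℓ² norm of its entries. -/
noncomputable def frob {m n : ℕ} (A : Matrix (Fin m) (Fin n) ℂ) : ℝ :=
  Real.sqrt (∑ i, ∑ j, ‖A i j‖ ^ 2)

section Frobenius

variable {l m n : ℕ}

noncomputable def frobVec (A : Matrix (Fin m) (Fin n) ℂ) : EuclideanSpace ℂ (Fin m × Fin n) :=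
  WithLp.toLp 2 fun p => A p.1 p.2

lemma frobVec_add (A B : Matrix (Fin m) (Fin n) ℂ) : frobVec (A + B) = frobVec A + frobVec B :=
  rfl

lemma frobVec_smul (c : ℂ) (A : Matrix (Fin m) (Fin n) ℂ) : frobVec (c • A) = c • frobVec A :=
  rfl

lemma norm_frobVec (A : Matrix (Fin m) (Fin n) ℂ) : ‖frobVec A‖ = frob A := by
  rw [EuclideanSpace.norm_eq, frob, Fintype.sum_prod_type]
  rfl

lemma inner_frobVec (A B : Matrix (Fin m) (Fin n) ℂ) :
    inner ℂ (frobVec A) (frobVec B) = trace (Aᴴ * B) := by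
  rw [frobVec, frobVec, EuclideanSpace.inner_toLp_toLp, dotProduct, Fintype.sum_prod_type,
    Finset.sum_comm]
  simp only [trace, diag_apply, mul_apply, conjTranspose_apply, Pi.star_apply, mul_comm]

lemma frob_nonneg (A : Matrix (Fin m) (Fin n) ℂ) : 0 ≤ frob A :=
  Real.sqrt_nonneg _

lemma frob_sq_eq_trace (A : Matrix (Fin m) (Fin n) ℂ) :
    ((frob A ^ 2 : ℝ) : ℂ) = trace (Aᴴ * A) := by
  rw [← inner_frobVec, inner_self_eq_norm_sq_to_K, norm_frobVec]
  push_cast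
  rfl

lemma frob_sq_eq_trace_mul_conjTranspose (A : Matrix (Fin m) (Fin n) ℂ) :
    ((frob A ^ 2 : ℝ) : ℂ) = trace (A * Aᴴ) := by
  rw [frob_sq_eq_trace, trace_mul_comm]

lemma frob_conjTranspose (A : Matrix (Fin m) (Fin n) ℂ) : frob Aᴴ = frob A := by
  have h : frob Aᴴ ^ 2 = frob A ^ 2 := by
    apply Complex.ofReal_injective
    rw [frob_sq_eq_trace, conjTranspose_conjTranspose, frob_sq_eq_trace_mul_conjTranspose]
  exact (pow_left_inj₀ (frob_nonneg _) (frob_nonneg _) two_ne_zero).mp h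

lemma frob_pos {A : Matrix (Fin m) (Fin n) ℂ} (hA : A ≠ 0) : 0 < frob A := by
  rw [← norm_frobVec, norm_pos_iff]
  intro h
  exact hA (ext fun i j => congrArg (fun v => v (i, j)) h)

lemma frob_smul (c : ℂ) (A : Matrix (Fin m) (Fin n) ℂ) : frob (c • A) = ‖c‖ * frob A := by
  rw [← norm_frobVec, frobVec_smul, norm_smul, norm_frobVec]

lemma frob_add_sq (A B : Matrix (Fin m) (Fin n) ℂ) :
    frob (A + B) ^ 2 = frob A ^ 2 + 2 * (trace (Aᴴ * B)).re + frob B ^ 2 := by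
  rw [← norm_frobVec, frobVec_add, norm_add_sq (𝕜 := ℂ), inner_frobVec, norm_frobVec,
    norm_frobVec]
  rfl

lemma re_trace_mul_le (A : Matrix (Fin l) (Fin m) ℂ) (B : Matrix (Fin m) (Fin l) ℂ) :
    (trace (A * B)).re ≤ frob A * frob B := by
  simpa only [inner_frobVec, conjTranspose_conjTranspose, norm_frobVec, frob_conjTranspose,
    RCLike.re_to_complex] using re_inner_le_norm (𝕜 := ℂ) (frobVec Aᴴ) (frobVec B)

end Frobenius

section ScaleAlong

variable {𝕜 R : Type*} [CommRing 𝕜] [Ring R] [Algebra 𝕜 R]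

def scaleAlong (p : R) (c : 𝕜) : R := 1 - p + c • p

lemma scaleAlong_one (p : R) : scaleAlong p (1 : 𝕜) = 1 := by
  rw [scaleAlong, one_smul, sub_add_cancel]

lemma scaleAlong_mul_scaleAlong {p : R} (hp : IsIdempotentElem p) (c d : 𝕜) :
    scaleAlong p c * scaleAlong p d = scaleAlong p (c * d) := by
  have h₁ : (1 - p) * p = 0 := hp.one_sub_mul_self
  have h₂ : p * (1 - p) = 0 := hp.mul_one_sub_self
  have h₃ : (1 - p) * (1 - p) = 1 - p := hp.one_sub.eq
  simp only [scaleAlong, add_mul, mul_add, mul_smul_comm, smul_mul_assoc, h₁, h₂, h₃, hp.eq,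
    smul_zero, add_zero, zero_add, smul_smul, mul_comm d c]

end ScaleAlong

section Projection

variable {m n k : ℕ} {P : Matrix (Fin n) (Fin n) ℂ}

lemma frob_mul_scaleAlong_sq (hP : IsStarProjection P) (A : Matrix (Fin m) (Fin n) ℂ) (c : ℂ) :
    frob (A * scaleAlong P c) ^ 2 = frob (A * (1 - P)) ^ 2 + ‖c‖ ^ 2 * frob (A * P) ^ 2 := by
  have hQH : (1 - P)ᴴ = 1 - P := hP.one_sub.isSelfAdjoint
  have hcross : trace ((A * (1 - P))ᴴ * (c • (A * P))) = 0 := by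
    rw [conjTranspose_mul, hQH, Matrix.mul_smul, trace_smul, Matrix.mul_assoc, trace_mul_comm,
      Matrix.mul_assoc, Matrix.mul_assoc, hP.isIdempotentElem.mul_one_sub_self, Matrix.mul_zero,
      Matrix.mul_zero, trace_zero, smul_zero]
  rw [scaleAlong, Matrix.mul_add, Matrix.mul_smul, frob_add_sq, hcross, frob_smul,
    Complex.zero_re, mul_zero, add_zero, mul_pow]

lemma conjTranspose_scaleAlong (hP : IsStarProjection P) (c : ℂ) :
    (scaleAlong P c)ᴴ = scaleAlong P (star c) := by
  have hPH : Pᴴ = P := hP.isSelfAdjoint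
  rw [scaleAlong, scaleAlong, conjTranspose_add, conjTranspose_sub, conjTranspose_one,
    conjTranspose_smul, hPH]

lemma frob_scaleAlong_mul_sq (hP : IsStarProjection P) (B : Matrix (Fin n) (Fin k) ℂ) (c : ℂ) :
    frob (scaleAlong P c * B) ^ 2 = frob ((1 - P) * B) ^ 2 + ‖c‖ ^ 2 * frob (P * B) ^ 2 := by
  have hPH : Pᴴ = P := hP.isSelfAdjoint
  have hQH : (1 - P)ᴴ = 1 - P := hP.one_sub.isSelfAdjoint
  rw [← frob_conjTranspose, conjTranspose_mul, conjTranspose_scaleAlong hP,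
    frob_mul_scaleAlong_sq hP, norm_star, ← frob_conjTranspose ((1 - P) * B),
    ← frob_conjTranspose (P * B), conjTranspose_mul, conjTranspose_mul, hPH, hQH]

lemma frob_sq_eq_mul_one_sub_add_mul (hP : IsStarProjection P) (A : Matrix (Fin m) (Fin n) ℂ) :
    frob A ^ 2 = frob (A * (1 - P)) ^ 2 + frob (A * P) ^ 2 := by
  simpa only [scaleAlong_one, Matrix.mul_one, norm_one, one_pow, one_mul]
    using frob_mul_scaleAlong_sq hP A 1

lemma frob_sq_eq_one_sub_mul_add_mul (hP : IsStarProjection P) (B : Matrix (Fin n) (Fin k) ℂ) :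
    frob B ^ 2 = frob ((1 - P) * B) ^ 2 + frob (P * B) ^ 2 := by
  simpa only [scaleAlong_one, Matrix.one_mul, norm_one, one_pow, one_mul]
    using frob_scaleAlong_mul_sq hP B 1

lemma frob_mul_le_of_isStarProjection (hP : IsStarProjection P) (A : Matrix (Fin m) (Fin n) ℂ) :
    frob (A * P) ≤ frob A := by
  refine (pow_le_pow_iff_left₀ (frob_nonneg _) (frob_nonneg _) two_ne_zero).mp ?_
  rw [frob_sq_eq_mul_one_sub_add_mul hP A]
  exact le_add_of_nonneg_left (sq_nonneg _)

lemma trace_conjTranspose_mul_self_mul (hP : IsStarProjection P)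
    (A : Matrix (Fin m) (Fin n) ℂ) : trace (Aᴴ * A * P) = ((frob (A * P) ^ 2 : ℝ) : ℂ) := by
  have hPH : Pᴴ = P := hP.isSelfAdjoint
  rw [frob_sq_eq_trace, conjTranspose_mul, hPH, Matrix.mul_assoc P, trace_mul_comm P]
  simp only [Matrix.mul_assoc, hP.isIdempotentElem.eq]

lemma trace_mul_conjTranspose_self_mul (hP : IsStarProjection P)
    (B : Matrix (Fin n) (Fin k) ℂ) : trace (B * Bᴴ * P) = ((frob (P * B) ^ 2 : ℝ) : ℂ) := by
  have hPH : Pᴴ = P := hP.isSelfAdjoint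
  simpa only [conjTranspose_conjTranspose, ← frob_conjTranspose (P * B), conjTranspose_mul, hPH]
    using trace_conjTranspose_mul_self_mul hP Bᴴ

lemma frob_mul_conjTranspose_eq {Z : Matrix (Fin m) (Fin n) ℂ} (hZ : IsStarProjection (Zᴴ * Z))
    (B : Matrix (Fin k) (Fin n) ℂ) : frob (B * Zᴴ) = frob (B * (Zᴴ * Z)) := by
  refine (pow_left_inj₀ (frob_nonneg _) (frob_nonneg _) two_ne_zero).mp
    (Complex.ofReal_injective ?_)
  rw [frob_sq_eq_trace_mul_conjTranspose, ← trace_conjTranspose_mul_self_mul hZ,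
    conjTranspose_mul, conjTranspose_conjTranspose, Matrix.mul_assoc Bᴴ, trace_mul_comm Bᴴ]
  simp only [Matrix.mul_assoc]

lemma re_trace_mul_mul_conjTranspose_le {Z : Matrix (Fin m) (Fin k) ℂ}
    (hZ : IsStarProjection (Zᴴ * Z)) (A : Matrix (Fin m) (Fin n) ℂ)
    (B : Matrix (Fin n) (Fin k) ℂ) : (trace (A * B * Zᴴ)).re ≤ frob A * frob B :=
  calc (trace (A * B * Zᴴ)).re = (trace (A * (B * Zᴴ))).re := by rw [Matrix.mul_assoc]
    _ ≤ frob A * frob (B * Zᴴ) := re_trace_mul_le A (B * Zᴴ)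
    _ = frob A * frob (B * (Zᴴ * Z)) := by rw [frob_mul_conjTranspose_eq hZ]
    _ ≤ frob A * frob B :=
      mul_le_mul_of_nonneg_left (frob_mul_le_of_isStarProjection hZ B) (frob_nonneg A)

end Projection

section Spectral

variable {𝕜 : Type*} [RCLike 𝕜] {n : Type*} [Fintype n]

lemma isStarProjection_vecMulVec {v : n → 𝕜} (hv : star v ⬝ᵥ v = 1) :
    IsStarProjection (vecMulVec v (star v)) where
  isIdempotentElem := by
    rw [IsIdempotentElem, vecMulVec_mul_vecMulVec, hv, one_smul]
  isSelfAdjoint := by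
    rw [IsSelfAdjoint, star_eq_conjTranspose, conjTranspose_vecMulVec, star_star]

lemma isStarProjection_conjTranspose_mul_mul {G : Matrix n n 𝕜} (hG : G.IsHermitian)
    {k : Type*} [Fintype k] {B : Matrix n k 𝕜} (hGWG : G * (B * Bᴴ) * G = G) :
    IsStarProjection (Bᴴ * G * B) where
  isIdempotentElem :=
    calc Bᴴ * G * B * (Bᴴ * G * B) = Bᴴ * (G * (B * Bᴴ) * G) * B := by
          simp only [Matrix.mul_assoc]
      _ = Bᴴ * G * B := by rw [hGWG, Matrix.mul_assoc]
  isSelfAdjoint := by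
    rw [IsSelfAdjoint, star_eq_conjTranspose, conjTranspose_mul, conjTranspose_mul,
      conjTranspose_conjTranspose, hG.eq, Matrix.mul_assoc]

namespace Matrix.IsHermitian

variable [DecidableEq n]

lemma eq_zero_of_forall_isStarProjection {X : Matrix n n 𝕜} (hX : X.IsHermitian)
    (h : ∀ P : Matrix n n 𝕜, IsStarProjection P → RCLike.re (trace (X * P)) = 0) : X = 0 := by
  rw [← hX.eigenvalues_eq_zero_iff]
  funext i
  set v : n → 𝕜 := ⇑(hX.eigenvectorBasis i)
  have hv : star v ⬝ᵥ v = 1 := by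
    rw [dotProduct_comm, ← EuclideanSpace.inner_eq_star_dotProduct,
      hX.eigenvectorBasis.inner_eq_one]
  rw [hX.eigenvalues_eq, Pi.zero_apply, ← h _ (isStarProjection_vecMulVec hv), mul_vecMulVec,
    trace_vecMulVec, dotProduct_comm]

/-- `cfc (·⁻¹)` inverts the nonzero eigenvalues and, as `(0 : ℝ)⁻¹ = 0`, kills the kernel. -/
lemma exists_pseudoinverse {W : Matrix n n 𝕜} (hW : W.IsHermitian) :
    ∃ G : Matrix n n 𝕜, G.IsHermitian ∧ G * W * G = G ∧ W * G * W = W := by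
  have hfin : (spectrum ℝ W).Finite := finite_real_spectrum
  have hmul (f g : ℝ → ℝ) : cfc f W * cfc g W = cfc (f * g) W :=
    (cfc_mul f g W (hfin.continuousOn _) (hfin.continuousOn _)).symm
  have hid : cfc id W = W := cfc_id ℝ W hW.isSelfAdjoint
  refine ⟨cfc Inv.inv W, (cfc_predicate (R := ℝ) Inv.inv W : IsSelfAdjoint _), ?_, ?_⟩
  · calc cfc Inv.inv W * W * cfc Inv.inv W
        = cfc Inv.inv W * cfc id W * cfc Inv.inv W := by rw [hid]
      _ = cfc Inv.inv W := by
        rw [hmul, hmul]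
        exact cfc_congr fun x _ => by simpa using mul_inv_mul_cancel x⁻¹
  · calc W * cfc Inv.inv W * W = cfc id W * cfc Inv.inv W * cfc id W := by rw [hid]
      _ = W := by
        rw [hmul, hmul]
        conv_rhs => rw [← hid]
        exact cfc_congr fun x _ => mul_inv_mul_cancel (x : ℝ)

end Matrix.IsHermitian

end Spectral

lemma le_of_forall_add_le_div_add_mul {α β : ℝ} (hβ : 0 ≤ β)
    (h : ∀ r > 0, α + β ≤ α / r + β * r) : α ≤ β := by
  by_contra! hlt
  have hα : 0 < α := by linarith
  have hr := h (2 * α / (α + β)) (by positivity)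
  rw [div_div_eq_mul_div] at hr
  field_simp at hr
  nlinarith [sq_pos_of_ne_zero (sub_ne_zero.2 hlt.ne)]

lemma eq_of_forall_add_le_div_add_mul {α β : ℝ} (hα : 0 ≤ α) (hβ : 0 ≤ β)
    (h : ∀ r > 0, α + β ≤ α / r + β * r) : α = β :=
  le_antisymm (le_of_forall_add_le_div_add_mul hβ h)
    (le_of_forall_add_le_div_add_mul hα fun r hr => by
      simpa [add_comm, div_eq_mul_inv, mul_comm] using h r⁻¹ (inv_pos.2 hr))

section MinimalForm

variable {m n k : ℕ}

def IsMinimalSingularityForm (A : Matrix (Fin m) (Fin n) ℂ) (B : Matrix (Fin n) (Fin k) ℂ) :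
    Prop :=
  ∀ (A' : Matrix (Fin m) (Fin n) ℂ) (B' : Matrix (Fin n) (Fin k) ℂ),
    A' * B' = A * B → frob A * frob B ≤ frob A' * frob B'

lemma IsMinimalSingularityForm.frob_mul_sq_mul_eq {A : Matrix (Fin m) (Fin n) ℂ}
    {B : Matrix (Fin n) (Fin k) ℂ} (hmin : IsMinimalSingularityForm A B)
    {P : Matrix (Fin n) (Fin n) ℂ} (hP : IsStarProjection P) :
    frob (A * P) ^ 2 * frob B ^ 2 = frob A ^ 2 * frob (P * B) ^ 2 := by
  set p := frob (A * (1 - P)) ^ 2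
  set x := frob (A * P) ^ 2
  set q := frob ((1 - P) * B) ^ 2
  set y := frob (P * B) ^ 2
  have hAsq : frob A ^ 2 = p + x := frob_sq_eq_mul_one_sub_add_mul hP A
  have hBsq : frob B ^ 2 = q + y := frob_sq_eq_one_sub_mul_add_mul hP B
  have hamgm : p * y = x * q := by
    refine eq_of_forall_add_le_div_add_mul (by positivity) (by positivity) fun r hr => ?_
    set c : ℂ := (√r : ℂ)
    have hc : c ≠ 0 := Complex.ofReal_ne_zero.2 (Real.sqrt_ne_zero'.2 hr)
    have hnorm : ‖c‖ ^ 2 = r := by simp [c, Real.sq_sqrt hr.le]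
    have hprod : A * scaleAlong P c * (scaleAlong P c⁻¹ * B) = A * B := by
      rw [Matrix.mul_assoc, ← Matrix.mul_assoc (scaleAlong P c),
        scaleAlong_mul_scaleAlong hP.isIdempotentElem, mul_inv_cancel₀ hc, scaleAlong_one,
        Matrix.one_mul]
    have hle := pow_le_pow_left₀ (mul_nonneg (frob_nonneg A) (frob_nonneg B)) (hmin _ _ hprod) 2
    rw [mul_pow, mul_pow, hAsq, hBsq, frob_mul_scaleAlong_sq hP, frob_scaleAlong_mul_sq hP,
      norm_inv, inv_pow, hnorm] at hle
    have hrr : r * r⁻¹ = 1 := mul_inv_cancel₀ hr.ne'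
    rw [div_eq_mul_inv]
    linear_combination hle + x * y * hrr
  rw [hAsq, hBsq]
  linear_combination -hamgm

lemma IsMinimalSingularityForm.balanced {A : Matrix (Fin m) (Fin n) ℂ}
    {B : Matrix (Fin n) (Fin k) ℂ} (hmin : IsMinimalSingularityForm A B) (hA : A ≠ 0)
    (hB : B ≠ 0) : (frob A ^ 2)⁻¹ • (Aᴴ * A) = (frob B ^ 2)⁻¹ • (B * Bᴴ) := by
  set X := frob B ^ 2 • (Aᴴ * A) - frob A ^ 2 • (B * Bᴴ)
  have hX : X.IsHermitian :=
    ((isHermitian_conjTranspose_mul_self A).smul (IsSelfAdjoint.all _)).sub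
      ((isHermitian_mul_conjTranspose_self B).smul (IsSelfAdjoint.all _))
  have hX0 : X = 0 := hX.eq_zero_of_forall_isStarProjection fun P hP => by
    rw [Matrix.sub_mul, smul_mul_assoc, smul_mul_assoc, trace_sub, trace_smul, trace_smul,
      trace_conjTranspose_mul_self_mul hP, trace_mul_conjTranspose_self_mul hP]
    simp only [RCLike.re_to_complex, Complex.sub_re, Complex.smul_re, Complex.ofReal_re,
      smul_eq_mul]
    linarith [hmin.frob_mul_sq_mul_eq hP]
  have ha := frob_pos hA
  have hb := frob_pos hB
  calc (frob A ^ 2)⁻¹ • (Aᴴ * A)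
      = (frob A ^ 2 * frob B ^ 2)⁻¹ • (frob B ^ 2 • (Aᴴ * A)) := by
        rw [smul_smul]; congr 1; field_simp
    _ = (frob A ^ 2 * frob B ^ 2)⁻¹ • (frob A ^ 2 • (B * Bᴴ)) := by rw [sub_eq_zero.mp hX0]
    _ = (frob B ^ 2)⁻¹ • (B * Bᴴ) := by
        rw [smul_smul]; congr 1; field_simp

lemma exists_certificate_of_balanced {A : Matrix (Fin m) (Fin n) ℂ}
    {B : Matrix (Fin n) (Fin k) ℂ} (hA : A ≠ 0) (hB : B ≠ 0)
    (hbal : (frob A ^ 2)⁻¹ • (Aᴴ * A) = (frob B ^ 2)⁻¹ • (B * Bᴴ)) :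
    ∃ Z : Matrix (Fin m) (Fin k) ℂ,
      IsStarProjection (Zᴴ * Z) ∧ (trace (A * B * Zᴴ)).re = frob A * frob B := by
  set a := frob A
  set b := frob B
  have ha : 0 < a := frob_pos hA
  have hb : 0 < b := frob_pos hB
  have hAA : (b / a) ^ 2 • (Aᴴ * A) = B * Bᴴ := by
    calc (b / a) ^ 2 • (Aᴴ * A) = b ^ 2 • ((a ^ 2)⁻¹ • (Aᴴ * A)) := by
          rw [smul_smul, div_pow, div_eq_mul_inv]
      _ = B * Bᴴ := by rw [hbal, smul_smul, mul_inv_cancel₀ (by positivity), one_smul]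
  obtain ⟨G, hG, hGWG, hWGW⟩ := (isHermitian_mul_conjTranspose_self B).exists_pseudoinverse
  have hZH : ((b / a) • (A * G * B))ᴴ = (b / a) • (Bᴴ * G * Aᴴ) := by
    rw [conjTranspose_smul, star_trivial, conjTranspose_mul, conjTranspose_mul, hG.eq,
      Matrix.mul_assoc]
  refine ⟨(b / a) • (A * G * B), ?_, ?_⟩
  · convert isStarProjection_conjTranspose_mul_mul hG hGWG using 1
    calc ((b / a) • (A * G * B))ᴴ * ((b / a) • (A * G * B))
        = Bᴴ * G * ((b / a) ^ 2 • (Aᴴ * A)) * G * B := by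
          rw [hZH]
          simp only [Matrix.mul_smul, Matrix.smul_mul, smul_smul, Matrix.mul_assoc, sq]
      _ = Bᴴ * (G * (B * Bᴴ) * G) * B := by rw [hAA]; simp only [Matrix.mul_assoc]
      _ = Bᴴ * G * B := by rw [hGWG, Matrix.mul_assoc]
  · set T := trace (B * Bᴴ * G * (Aᴴ * A))
    have hT : (b / a) ^ 2 • T = ((b ^ 2 : ℝ) : ℂ) := by
      rw [← trace_smul, ← Matrix.mul_smul, hAA, hWGW, frob_sq_eq_trace_mul_conjTranspose]
    have hTre : T.re = a ^ 2 := by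
      have h := congrArg Complex.re hT
      rw [Complex.smul_re, Complex.ofReal_re, smul_eq_mul, div_pow] at h
      field_simp at h
      exact h
    have htr : trace (A * B * (b / a) • (Bᴴ * G * Aᴴ)) = (b / a) • T := by
      rw [Matrix.mul_smul, trace_smul]
      simp only [T, Matrix.mul_assoc]
      rw [trace_mul_comm A]
      simp only [Matrix.mul_assoc]
    rw [hZH, htr, Complex.smul_re, hTre, smul_eq_mul]
    field_simp

lemma isMinimalSingularityForm_of_balanced {A : Matrix (Fin m) (Fin n) ℂ}
    {B : Matrix (Fin n) (Fin k) ℂ} (hA : A ≠ 0) (hB : B ≠ 0)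
    (hbal : (frob A ^ 2)⁻¹ • (Aᴴ * A) = (frob B ^ 2)⁻¹ • (B * Bᴴ)) :
    IsMinimalSingularityForm A B := by
  obtain ⟨Z, hZ, htr⟩ := exists_certificate_of_balanced hA hB hbal
  intro A' B' hAB
  calc frob A * frob B = (trace (A' * B' * Zᴴ)).re := by rw [hAB, htr]
    _ ≤ frob A' * frob B' := re_trace_mul_mul_conjTranspose_le hZ A' B'

lemma isMinimalSingularityForm_iff_balanced {A : Matrix (Fin m) (Fin n) ℂ}
    {B : Matrix (Fin n) (Fin k) ℂ} (hA : A ≠ 0) (hB : B ≠ 0) :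
    IsMinimalSingularityForm A B ↔ (frob A ^ 2)⁻¹ • (Aᴴ * A) = (frob B ^ 2)⁻¹ • (B * Bᴴ) :=
  ⟨fun hmin => hmin.balanced hA hB, isMinimalSingularityForm_of_balanced hA hB⟩

end MinimalForm

/-- `(A₀,B₀)` with `A₀B₀ = AB ≠ 0` is a minimal singularity form
(i.e. minimizes `‖A'‖·‖B'‖` over `{(A',B') : A'B' = AB}`) if and only if
`A₀ᴴA₀/‖A₀‖² = B₀B₀ᴴ/‖B₀‖²`. -/
theorem stmt3 (M N K : ℕ)
    (A A₀ : Matrix (Fin M) (Fin N) ℂ) (B B₀ : Matrix (Fin N) (Fin K) ℂ)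
    (hAB : A * B ≠ 0) (h0 : A₀ * B₀ = A * B) :
    (∀ (A' : Matrix (Fin M) (Fin N) ℂ) (B' : Matrix (Fin N) (Fin K) ℂ),
        A' * B' = A * B → frob A₀ * frob B₀ ≤ frob A' * frob B') ↔
      ((frob A₀) ^ 2)⁻¹ • (A₀ᴴ * A₀) = ((frob B₀) ^ 2)⁻¹ • (B₀ * B₀ᴴ) := by
  have hA₀ : A₀ ≠ 0 := by
    rintro rfl
    exact hAB (by rw [← h0, Matrix.zero_mul])
  have hB₀ : B₀ ≠ 0 := by
    rintro rfl
    exact hAB (by rw [← h0, Matrix.mul_zero])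
  rw [← h0]
  exact isMinimalSingularityForm_iff_balanced hA₀ hB₀
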